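/- Let C be a perfect code in GP(n,k). If u_ℓ, u_{ℓ+1}, u_{ℓ+2}, u_{ℓ+3} ∉ C for some ℓ ∈ ℤ_n, then a contradiction arises: the vertex v_ℓ is neither in C nor adjacent to a vertex of C. Consequently, no four consecutive outer vertices can all avoid a perfect code. -/

import Mathlib

/-!
If `u_l, …, u_{l+3}` avoid the perfect code `C`, then `v_{l+1}, v_{l+2} ∈ C`, since their
outer neighbours are not available to dominate them. The inner neighbours `v_{l+1±k}`,
`v_{l+2±k}` are then already dominated, so `u_{l+1±k}, u_{l+2±k} ∉ C`, which forces
`u_{l+3±k} ∈ C`. Hence `v_{l+3±k} ∉ C`, so `v_{l+3}` can only be dominated by itself: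
`v_{l+3} ∈ C`, and therefore `u_{l+4} ∉ C`. The gap of four propagates along the outer cycle,
so every `v_{l+m+1}` lies in `C`, and `v_{l+1}, v_{l+1+k}` are adjacent code vertices.
-/

/-- The generalized Petersen graph GP(n,k): vertices are `Sum.inl i` (outer, u_i)
and `Sum.inr i` (inner, v_i) for `i : ZMod n`. -/
def GP (n k : ℕ) : SimpleGraph (ZMod n ⊕ ZMod n) where
  Adj x y :=
    match x, y with
    | .inl i, .inl j => i ≠ j ∧ (j = i + 1 ∨ i = j + 1)
    | .inl i, .inr j => i = j
    | .inr i, .inl j => i = j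
    | .inr i, .inr j => i ≠ j ∧ (j = i + (k : ZMod n) ∨ i = j + (k : ZMod n))
  symm := by constructor; rintro (i|i) (j|j) h <;> simp_all <;> tauto
  loopless := by constructor; rintro (i|i) h <;> simp_all

/-- A perfect code: an independent set such that every vertex not in `C`
has exactly one neighbor in `C`. -/
def IsPerfectCode {V : Type*} (G : SimpleGraph V) (C : Set V) : Prop :=
  (∀ x ∈ C, ∀ y ∈ C, ¬ G.Adj x y) ∧ ∀ x ∉ C, ∃! y, y ∈ C ∧ G.Adj x y

/-- A total perfect code: every vertex has exactly one neighbor in `C`. -/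
def IsTotalPerfectCode {V : Type*} (G : SimpleGraph V) (C : Set V) : Prop :=
  ∀ x, ∃! y, y ∈ C ∧ G.Adj x y

namespace IsPerfectCode

variable {V : Type*} {G : SimpleGraph V} {C : Set V}

theorem notMem_of_adj (hC : IsPerfectCode G C) {x y : V} (hx : x ∈ C) (hxy : G.Adj x y) :
    y ∉ C :=
  fun hy => hC.1 x hx y hy hxy

theorem exists_mem_adj (hC : IsPerfectCode G C) {x : V} (hx : x ∉ C) : ∃ y ∈ C, G.Adj x y :=
  (hC.2 x hx).exists

theorem notMem_of_adj_of_adj (hC : IsPerfectCode G C) {x a b : V} (ha : a ∈ C)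
    (hxa : G.Adj x a) (hxb : G.Adj x b) (hab : a ≠ b) : b ∉ C := fun hb =>
  hab ((hC.2 x (hC.notMem_of_adj ha hxa.symm)).unique ⟨ha, hxa⟩ ⟨hb, hxb⟩)

end IsPerfectCode

namespace GP

variable {n k : ℕ}

theorem adj_inl_inr (i : ZMod n) : (GP n k).Adj (.inl i) (.inr i) := rfl

theorem adj_inl_add_one [Nontrivial (ZMod n)] (i : ZMod n) :
    (GP n k).Adj (.inl i) (.inl (i + 1)) :=
  ⟨by simp, .inl rfl⟩

theorem adj_inr_add (hk : (k : ZMod n) ≠ 0) (i : ZMod n) :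
    (GP n k).Adj (.inr i) (.inr (i + k)) :=
  ⟨by simpa using hk, .inl rfl⟩

theorem adj_inr_sub (hk : (k : ZMod n) ≠ 0) (i : ZMod n) :
    (GP n k).Adj (.inr i) (.inr (i - k)) := by
  simpa using (adj_inr_add hk (i - k)).symm

theorem eq_of_adj_inl {j : ZMod n} {y : ZMod n ⊕ ZMod n} (h : (GP n k).Adj (.inl j) y) :
    y = .inl (j - 1) ∨ y = .inl (j + 1) ∨ y = .inr j := by
  rcases y with m | m
  · obtain ⟨-, rfl | rfl⟩ := h <;> simp
  · cases h; simp

theorem eq_of_adj_inr {j : ZMod n} {y : ZMod n ⊕ ZMod n} (h : (GP n k).Adj (.inr j) y) :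
    y = .inl j ∨ y = .inr (j + k) ∨ y = .inr (j - k) := by
  rcases y with m | m
  · cases h; simp
  · obtain ⟨-, rfl | rfl⟩ := h <;> simp

variable {C : Set (ZMod n ⊕ ZMod n)}

theorem mem_nbr_of_inl_notMem (hC : IsPerfectCode (GP n k) C) {j : ZMod n}
    (hj : .inl j ∉ C) : .inl (j - 1) ∈ C ∨ .inl (j + 1) ∈ C ∨ .inr j ∈ C := by
  obtain ⟨y, hy, hjy⟩ := hC.exists_mem_adj hj
  rcases eq_of_adj_inl hjy with rfl | rfl | rfl <;> simp [hy]

theorem mem_nbr_of_inr_notMem (hC : IsPerfectCode (GP n k) C) {j : ZMod n}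
    (hj : .inr j ∉ C) : .inl j ∈ C ∨ .inr (j + k) ∈ C ∨ .inr (j - k) ∈ C := by
  obtain ⟨y, hy, hjy⟩ := hC.exists_mem_adj hj
  rcases eq_of_adj_inr hjy with rfl | rfl | rfl <;> simp [hy]

theorem inr_mem_of_inl_notMem (hC : IsPerfectCode (GP n k) C) {j : ZMod n}
    (h₀ : .inl (j - 1) ∉ C) (h₁ : .inl j ∉ C) (h₂ : .inl (j + 1) ∉ C) : .inr j ∈ C := by
  have := mem_nbr_of_inl_notMem hC h₁
  tauto

theorem inl_add_one_mem_of_notMem (hC : IsPerfectCode (GP n k) C) {j : ZMod n}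
    (h₀ : .inl (j - 1) ∉ C) (h₁ : .inl j ∉ C) (hv : .inr j ∉ C) : .inl (j + 1) ∈ C := by
  have := mem_nbr_of_inl_notMem hC h₁
  tauto

theorem inl_add_four_notMem (hk : (k : ZMod n) ≠ 0) (hC : IsPerfectCode (GP n k) C)
    {l : ZMod n} (h₀ : .inl l ∉ C) (h₁ : .inl (l + 1) ∉ C) (h₂ : .inl (l + 2) ∉ C)
    (h₃ : .inl (l + 3) ∉ C) : .inl (l + 4) ∉ C := by
  have : Nontrivial (ZMod n) := nontrivial_of_ne _ _ hk
  have hv₁ : .inr (l + 1) ∈ C :=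
    inr_mem_of_inl_notMem hC (by simpa using h₀) h₁ (by convert h₂ using 3; ring)
  have hv₂ : .inr (l + 2) ∈ C :=
    inr_mem_of_inl_notMem hC (by convert h₁ using 3; ring) h₂ (by convert h₃ using 3; ring)
  have hv₃_nbr : ∀ d : ZMod n, (∀ i, (GP n k).Adj (.inr (i + d)) (.inr i)) →
      .inr (l + 3 + d) ∉ C := by
    intro d hd
    have hu₁ : .inl (l + 1 + d) ∉ C :=
      hC.notMem_of_adj_of_adj hv₁ (hd _) (adj_inl_inr _).symm Sum.inr_ne_inl
    have hu₂ : .inl (l + 2 + d) ∉ C :=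
      hC.notMem_of_adj_of_adj hv₂ (hd _) (adj_inl_inr _).symm Sum.inr_ne_inl
    have hu₃ : .inl (l + 3 + d) ∈ C := by
      convert inl_add_one_mem_of_notMem hC (j := l + 2 + d) (by convert hu₁ using 3; ring) hu₂
        (hC.notMem_of_adj hv₂ (hd _).symm) using 2
      ring
    exact hC.notMem_of_adj hu₃ (adj_inl_inr _)
  have hv₃ : .inr (l + 3) ∈ C := by
    by_contra hv₃
    rcases mem_nbr_of_inr_notMem hC hv₃ with h | h | h
    · exact h₃ h
    · exact hv₃_nbr k (fun i => (adj_inr_add hk i).symm) h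
    · exact hv₃_nbr (-k) (fun i => by simpa [sub_eq_add_neg] using (adj_inr_sub hk i).symm)
        (by rwa [← sub_eq_add_neg])
  rw [show l + 4 = l + 3 + 1 by ring]
  exact hC.notMem_of_adj_of_adj hv₃ (adj_inl_inr _) (adj_inl_add_one _) Sum.inr_ne_inl

theorem inl_add_natCast_notMem (hk : (k : ZMod n) ≠ 0) (hC : IsPerfectCode (GP n k) C)
    {l : ZMod n} (h₀ : .inl l ∉ C) (h₁ : .inl (l + 1) ∉ C) (h₂ : .inl (l + 2) ∉ C)
    (h₃ : .inl (l + 3) ∉ C) : ∀ m : ℕ, .inl (l + m) ∉ C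
  | 0 => by simpa
  | 1 => by simpa
  | 2 => by simpa
  | 3 => by simpa
  | m + 4 => by
    have ih₀ := inl_add_natCast_notMem hk hC h₀ h₁ h₂ h₃ m
    have ih₁ := inl_add_natCast_notMem hk hC h₀ h₁ h₂ h₃ (m + 1)
    have ih₂ := inl_add_natCast_notMem hk hC h₀ h₁ h₂ h₃ (m + 2)
    have ih₃ := inl_add_natCast_notMem hk hC h₀ h₁ h₂ h₃ (m + 3)
    push_cast [← add_assoc] at ih₁ ih₂ ih₃ ⊢
    exact inl_add_four_notMem hk hC ih₀ ih₁ ih₂ ih₃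

end GP

theorem stmt_4_general (n k : ℕ) (hk0 : (k : ZMod n) ≠ 0)
    (C : Set (ZMod n ⊕ ZMod n)) (hC : IsPerfectCode (GP n k) C)
    (l : ZMod n) (h0 : Sum.inl l ∉ C) (h1 : Sum.inl (l + 1) ∉ C)
    (h2 : Sum.inl (l + 2) ∉ C) (h3 : Sum.inl (l + 3) ∉ C) :
    False := by
  have hout := GP.inl_add_natCast_notMem hk0 hC h0 h1 h2 h3
  have hin (m : ℕ) : Sum.inr (l + m + 1) ∈ C :=
    GP.inr_mem_of_inl_notMem hC (by simpa using hout m) (by simpa [add_assoc] using hout (m + 1))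
      (by simpa [add_assoc, one_add_one_eq_two] using hout (m + 2))
  exact hC.notMem_of_adj (hin 0) (GP.adj_inr_add hk0 _) (by simpa [add_right_comm] using hin k)

/-- Step 2 of the proof of Theorem 1.1: no four consecutive outer vertices can
all avoid a perfect code. -/
theorem stmt_4 (n k : ℕ) (hn : 3 ≤ n) (hk0 : (k : ZMod n) ≠ 0)
    (C : Set (ZMod n ⊕ ZMod n)) (hC : IsPerfectCode (GP n k) C)
    (l : ZMod n) (h0 : Sum.inl l ∉ C) (h1 : Sum.inl (l + 1) ∉ C)
    (h2 : Sum.inl (l + 2) ∉ C) (h3 : Sum.inl (l + 3) ∉ C) :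
    False :=
  stmt_4_general n k hk0 C hC l h0 h1 h2 h3
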